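/- arXiv:2508.02891 — 4 statements merged into one kernel-verified Lean document; each statement's English description precedes it below -/
import Mathlib

section
/- For all vectors a_1,a_2,a_3,b_1,b_2,b_3,c_1,c_2,c_3 ∈ ℂ^4, writing A = a_1∧a_2∧a_3, B = b_1∧b_2∧b_3, C = c_1∧c_2∧c_3, the vector A*B*C ∈ ℂ^4 admits the two expansions: ⟨(a_1∧a_2)*B*C⟩·a_3 − ⟨(a_1∧a_3)*B*C⟩·a_2 + ⟨(a_2∧a_3)*B*C⟩·a_1 = ⟨A*B*(c_1∧c_2)⟩·c_3 − ⟨A*B*(c_1∧c_3)⟩·c_2 + ⟨A*B*(c_2∧c_3)⟩·c_1, where each bracket ⟨X*Y*Z⟩ denotes the scalar given by the iterated shuffle product (X*Y)*Z of total degree 8 = 2·4. -/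
/-!
Five vectors in `ℂ⁴` satisfy the Cramer relation `Σᵢ (-1)ⁱ ⟨v₀ ⋯ v̂ᵢ ⋯ v₄⟩ vᵢ = 0`, the Laplace
expansion of a `5 × 5` determinant with a repeated column. Applied to `(a₁, a₂, a₃, bⱼ, bₖ)` it turns
the left-hand side into a combination of the `bⱼ`; applied to `(bⱼ, bₖ, c₁, c₂, c₃)` it turns the
right-hand side into the same combination.
-/

noncomputable section

/-- Vectors in `ℂ^4`. -/
abbrev V4 := Fin 4 → ℂ

/-- `⟨u₁ u₂ u₃ u₄⟩`: the determinant of the `4 × 4` matrix with columns `u₁, u₂, u₃, u₄`. -/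
def det4 (a b c d : V4) : ℂ :=
  Matrix.det (Matrix.of fun i j => ![a, b, c, d] j i)

/-- The scalar `⟨X * Y * Z⟩` given by the iterated shuffle product `(X * Y) * Z`
for blocks `X = (x₁,x₂)`, `Y = (y₁,y₂,y₃)`, `Z = (u₁,u₂,u₃)` of sizes `(2,3,3)`
(total degree `8 = 2·4`):
`Σ_{w ∈ S₃¹} sign(w)·⟨x₁ x₂ y_{w(2)} y_{w(3)}⟩·⟨y_{w(1)} u₁ u₂ u₃⟩`. -/
def chain233 (x1 x2 y1 y2 y3 u1 u2 u3 : V4) : ℂ :=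
  det4 x1 x2 y2 y3 * det4 y1 u1 u2 u3
    - det4 x1 x2 y1 y3 * det4 y2 u1 u2 u3
    + det4 x1 x2 y1 y2 * det4 y3 u1 u2 u3

/-- The scalar `⟨X * Y * Z⟩` given by the iterated shuffle product `(X * Y) * Z`
for blocks `X = (x₁,x₂,x₃)`, `Y = (y₁,y₂,y₃)`, `Z = (u₁,u₂)` of sizes `(3,3,2)`
(total degree `8 = 2·4`):
`Σ_{w ∈ S₃²} sign(w)·⟨x₁ x₂ x₃ y_{w(3)}⟩·⟨y_{w(1)} y_{w(2)} u₁ u₂⟩`. -/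
def chain332 (x1 x2 x3 y1 y2 y3 u1 u2 : V4) : ℂ :=
  det4 x1 x2 x3 y3 * det4 y1 y2 u1 u2
    - det4 x1 x2 x3 y2 * det4 y1 y3 u1 u2
    + det4 x1 x2 x3 y1 * det4 y2 y3 u1 u2

theorem sum_neg_one_pow_mul_det_removeNth_smul_eq_zero {R : Type*} [CommRing R]
    {n : ℕ} (v : Fin (n + 1) → Fin n → R) :
    ∑ i : Fin (n + 1), ((-1) ^ (i : ℕ) * (Matrix.of (i.removeNth v)).det) • v i = 0 := by
  funext r
  let A : Matrix (Fin (n + 1)) (Fin (n + 1)) R := Matrix.of fun i => Fin.cons (v i r) (v i)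
  have hA : A.det = 0 := Matrix.det_zero_of_column_eq (Fin.succ_ne_zero r).symm fun _ => rfl
  rw [Matrix.det_succ_column_zero] at hA
  rw [Finset.sum_apply, Pi.zero_apply, ← hA]
  refine Finset.sum_congr rfl fun i _ => ?_
  change _ = (-1) ^ (i : ℕ) * v i r * (Matrix.of (i.removeNth v)).det
  simp only [Pi.smul_apply, smul_eq_mul]
  ring

theorem det4_eq_det (a b c d : V4) : det4 a b c d = (Matrix.of ![a, b, c, d]).det := by
  rw [det4, ← Matrix.det_transpose]; rfl

theorem det4_cramer_relation (p q r s t : V4) :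
    det4 q r s t • p - det4 p r s t • q + det4 p q s t • r - det4 p q r t • s
      + det4 p q r s • t = 0 := by
  have h := sum_neg_one_pow_mul_det_removeNth_smul_eq_zero ![p, q, r, s, t]
  obtain ⟨h0, h1, h2, h3, h4⟩ :
      Fin.removeNth 0 ![p, q, r, s, t] = ![q, r, s, t] ∧
      Fin.removeNth 1 ![p, q, r, s, t] = ![p, r, s, t] ∧
      Fin.removeNth 2 ![p, q, r, s, t] = ![p, q, s, t] ∧
      Fin.removeNth 3 ![p, q, r, s, t] = ![p, q, r, t] ∧
      Fin.removeNth 4 ![p, q, r, s, t] = ![p, q, r, s] := by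
    refine ⟨?_, ?_, ?_, ?_, ?_⟩ <;> ext i : 1 <;> fin_cases i <;> rfl
  rw [Fin.sum_univ_five, h0, h1, h2, h3, h4] at h
  simp only [Matrix.cons_val, Fin.coe_ofNat_eq_mod] at h
  simp only [det4_eq_det]
  linear_combination (norm := module) h

/-- For all vectors `a₁,a₂,a₃,b₁,b₂,b₃,c₁,c₂,c₃ ∈ ℂ⁴`, writing
`A = a₁∧a₂∧a₃`, `B = b₁∧b₂∧b₃`, `C = c₁∧c₂∧c₃`, the vector `A * B * C ∈ ℂ⁴` admits the
two expansions:
`⟨(a₁∧a₂)*B*C⟩·a₃ − ⟨(a₁∧a₃)*B*C⟩·a₂ + ⟨(a₂∧a₃)*B*C⟩·a₁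
  = ⟨A*B*(c₁∧c₂)⟩·c₃ − ⟨A*B*(c₁∧c₃)⟩·c₂ + ⟨A*B*(c₂∧c₃)⟩·c₁`,
where each bracket `⟨X*Y*Z⟩` denotes the scalar given by the iterated shuffle product
`(X*Y)*Z` of total degree `8 = 2·4`. -/
theorem triple_shuffle_expansions (a1 a2 a3 b1 b2 b3 c1 c2 c3 : V4) :
    chain233 a1 a2 b1 b2 b3 c1 c2 c3 • a3
      - chain233 a1 a3 b1 b2 b3 c1 c2 c3 • a2
      + chain233 a2 a3 b1 b2 b3 c1 c2 c3 • a1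
    = chain332 a1 a2 a3 b1 b2 b3 c1 c2 • c3
      - chain332 a1 a2 a3 b1 b2 b3 c1 c3 • c2
      + chain332 a1 a2 a3 b1 b2 b3 c2 c3 • c1 := by
  -- `(A*B)*C`, with each `(bⱼ∧bₖ)*C = C*(bⱼ∧bₖ)` expanded along `bⱼ, bₖ` instead of the `c`'s
  calc _ = det4 a1 a2 a3 b3 • (det4 b1 c1 c2 c3 • b2 - det4 b2 c1 c2 c3 • b1)
          - det4 a1 a2 a3 b2 • (det4 b1 c1 c2 c3 • b3 - det4 b3 c1 c2 c3 • b1)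
          + det4 a1 a2 a3 b1 • (det4 b2 c1 c2 c3 • b3 - det4 b3 c1 c2 c3 • b2) := by
        simp only [chain233]
        linear_combination (norm := module)
          det4 b1 c1 c2 c3 • det4_cramer_relation a1 a2 a3 b2 b3
          - det4 b2 c1 c2 c3 • det4_cramer_relation a1 a2 a3 b1 b3
          + det4 b3 c1 c2 c3 • det4_cramer_relation a1 a2 a3 b1 b2
    _ = _ := by
        simp only [chain332]
        linear_combination (norm := module)
          det4 a1 a2 a3 b2 • det4_cramer_relation b1 b3 c1 c2 c3
          - det4 a1 a2 a3 b3 • det4_cramer_relation b1 b2 c1 c2 c3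
          - det4 a1 a2 a3 b1 • det4_cramer_relation b2 b3 c1 c2 c3

end
end

section
/- Let G be a finite leafless bipartite (multi)graph with black/white vertices and boundary vertices as described, suppose G has an acyclic reverse perfect orientation 𝒪 with source set I, and let (v, r) be an m-VRC on G. Then for every black vertex b of G, v_b = Σ_{i∈I} ( Σ_{P : i→b} wt(P) )·v_i, where the inner sum is over all directed paths P in 𝒪 from i to b (a finite set, by acyclicity), the empty path from b to b having weight 1, and wt(P) := (∏_{e∈P oriented black-to-white} r_e) / (∏_{e'∈P oriented white-to-black} (−r_{e'})). -/
open scoped Classical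

noncomputable section

variable {B W E : Type}

/-- One directed step of the orientation `o` of a bipartite graph with edge set `E`,
black endpoints `bEnd` and white endpoints `wEnd` (`o e = true` means the edge `e` is
directed from its black endpoint to its white endpoint). -/
def Step (bEnd : E → B) (wEnd : E → W) (o : E → Bool) : B ⊕ W → B ⊕ W → Prop
  | Sum.inl b, Sum.inr w => ∃ e, bEnd e = b ∧ wEnd e = w ∧ o e = true
  | Sum.inr w, Sum.inl b => ∃ e, bEnd e = b ∧ wEnd e = w ∧ o e = false
  | _, _ => False

/-- `IsDirPath bEnd wEnd o i l b`: the list of edges `l` is a directed walk in the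
orientation `o` from the black vertex `i` to the black vertex `b` (when the orientation
is acyclic, directed walks are exactly directed paths).  The empty list is the empty
path from `b` to `b`. -/
def IsDirPath (bEnd : E → B) (wEnd : E → W) (o : E → Bool) : B → List E → B → Prop
  | i, [], b => i = b
  | _, [_], _ => False
  | i, e₁ :: e₂ :: l, b =>
      bEnd e₁ = i ∧ o e₁ = true ∧ wEnd e₂ = wEnd e₁ ∧ o e₂ = false ∧
        IsDirPath bEnd wEnd o (bEnd e₂) l b

/-- The weight of a path: the product of `r e` over the edges of `l` oriented
black-to-white divided by the product of `−r e'` over the edges of `l` oriented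
white-to-black. -/
def pathWt (r : E → ℂ) (o : E → Bool) (l : List E) : ℂ :=
  ((l.filter fun e => o e).map r).prod /
    ((l.filter fun e => !o e).map fun e => -r e).prod

/-- A black vertex is a source of the orientation `o` if it has no incoming edge. -/
def IsSource (bEnd : E → B) (o : E → Bool) (b : B) : Prop :=
  ¬∃ e, bEnd e = b ∧ o e = false

/-!
Induct on black vertices along the orientation, which is well founded since it is acyclic.
A source `b` is reached only by the empty path. Any other `b` has a unique incoming edge `e₀`,
which is the unique outgoing edge of its white endpoint `w`; the relation at `w` expresses `v b`
as `∑ (r e / -r e₀) • v (bEnd e)` over the edges `e` entering `w`, and the directed paths ending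
at `b` are exactly the paths ending at such a `bEnd e` extended by `e, e₀`.
-/

open Finset Relation

section DirectedPaths

variable (bEnd : E → B) (wEnd : E → W) (o : E → Bool)

def Reaches (x y : B) : Prop :=
  TransGen (Step bEnd wEnd o) (Sum.inl x) (Sum.inl y)

variable {bEnd wEnd o}

theorem reaches_of_step {e e' : E} (he : o e = true) (hw : wEnd e' = wEnd e)
    (he' : o e' = false) : Reaches bEnd wEnd o (bEnd e) (bEnd e') :=
  .tail (b := Sum.inr (wEnd e)) (.single ⟨e, rfl, rfl, he⟩) ⟨e', rfl, hw, he'⟩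

theorem wellFounded_reaches [Finite B] (hacyc : ∀ x, ¬TransGen (Step bEnd wEnd o) x x) :
    WellFounded (Reaches bEnd wEnd o) :=
  haveI : IsTrans B (Reaches bEnd wEnd o) := ⟨fun _ _ _ => TransGen.trans⟩
  haveI : Std.Irrefl (Reaches bEnd wEnd o) := ⟨fun x => hacyc (Sum.inl x)⟩
  Finite.wellFounded_of_trans_of_irrefl _

theorem incoming_edge_unique {bd : Set B}
    (hbd_deg : ∀ b ∈ bd, {e | bEnd e = b}.ncard = 1)
    (hBin : ∀ b, b ∉ bd → ∃! e, bEnd e = b ∧ o e = false) {e e' : E}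
    (h : bEnd e = bEnd e') (he : o e = false) (he' : o e' = false) : e = e' := by
  by_cases hb : bEnd e' ∈ bd
  · obtain ⟨a, ha⟩ := Set.ncard_eq_one.1 (hbd_deg _ hb)
    have hmem : ∀ x, bEnd x = bEnd e' → x = a := fun x hx =>
      Set.mem_singleton_iff.1 (ha ▸ hx)
    exact (hmem e h).trans (hmem e' rfl).symm
  · exact (hBin _ hb).unique ⟨h, he⟩ ⟨rfl, he'⟩

theorem IsDirPath.append_pair {i : B} {l : List E} {e e' : E}
    (hl : IsDirPath bEnd wEnd o i l (bEnd e)) (he : o e = true) (hw : wEnd e' = wEnd e)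
    (he' : o e' = false) : IsDirPath bEnd wEnd o i (l ++ [e, e']) (bEnd e') :=
  match l, i, hl with
  | [], _, rfl => ⟨rfl, he, hw, he', rfl⟩
  | _ :: _ :: _, _, ⟨h₁, h₂, h₃, h₄, hl⟩ => ⟨h₁, h₂, h₃, h₄, hl.append_pair he hw he'⟩

theorem IsDirPath.exists_eq_append_pair {i b : B} :
    ∀ {l : List E}, IsDirPath bEnd wEnd o i l b → l ≠ [] →
      ∃ l' e e', l = l' ++ [e, e'] ∧ IsDirPath bEnd wEnd o i l' (bEnd e) ∧
        o e = true ∧ wEnd e' = wEnd e ∧ o e' = false ∧ bEnd e' = b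
  | [], _, hne => (hne rfl).elim
  | [_, _], ⟨h₁, h₂, h₃, h₄, h⟩, _ => ⟨[], _, _, rfl, h₁.symm, h₂, h₃, h₄, h⟩
  | x :: y :: z :: l, ⟨h₁, h₂, h₃, h₄, h⟩, _ => by
      obtain ⟨l', e, e', hl, hl', rest⟩ := h.exists_eq_append_pair (List.cons_ne_nil z l)
      exact ⟨x :: y :: l', e, e', by simp [hl], ⟨h₁, h₂, h₃, h₄, hl'⟩, rest⟩

theorem IsDirPath.eq_nil_of_isSource {i b : B} {l : List E}
    (hl : IsDirPath bEnd wEnd o i l b) (hb : IsSource bEnd o b) : l = [] := by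
  by_contra hne
  obtain ⟨-, -, e', -, -, -, -, he', rfl⟩ := hl.exists_eq_append_pair hne
  exact hb ⟨e', rfl, he'⟩

theorem finite_setOf_isDirPath [Finite B] [Finite E]
    (hacyc : ∀ x, ¬TransGen (Step bEnd wEnd o) x x) (i b : B) :
    {l | IsDirPath bEnd wEnd o i l b}.Finite := by
  induction b using (wellFounded_reaches hacyc).induction with
  | _ b ih =>
  refine ((Set.finite_singleton []).union <| Set.finite_iUnion
    fun p : {p : E × E // Reaches bEnd wEnd o (bEnd p.1) b} =>
      (ih _ p.2).image (· ++ [p.1.1, p.1.2])).subset fun l hl => ?_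
  rcases eq_or_ne l [] with rfl | hne
  · exact .inl rfl
  obtain ⟨l', e, e', rfl, hl', he, hw, he', rfl⟩ := IsDirPath.exists_eq_append_pair hl hne
  exact .inr (Set.mem_iUnion.2 ⟨⟨(e, e'), reaches_of_step he hw he'⟩, l', hl', rfl⟩)

end DirectedPaths

section PathWeights

variable (r : E → ℂ) (o : E → Bool)

@[simp]
theorem pathWt_nil : pathWt r o [] = 1 := by
  simp [pathWt]

theorem pathWt_append (l₁ l₂ : List E) :
    pathWt r o (l₁ ++ l₂) = pathWt r o l₁ * pathWt r o l₂ := by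
  simp [pathWt, List.filter_append, div_mul_div_comm]

theorem pathWt_pair {e e' : E} (he : o e = true) (he' : o e' = false) :
    pathWt r o [e, e'] = r e / -r e' := by
  simp [pathWt, he, he']

def pathSum (bEnd : E → B) (wEnd : E → W) (i b : B) : ℂ :=
  ∑ᶠ l ∈ {l | IsDirPath bEnd wEnd o i l b}, pathWt r o l

variable {r o} {bEnd : E → B} {wEnd : E → W}

theorem pathSum_of_isSource {b : B} (hb : IsSource bEnd o b) (i : B) :
    pathSum r o bEnd wEnd i b = if i = b then 1 else 0 := by
  have hpaths : {l | IsDirPath bEnd wEnd o i l b} = if i = b then {[]} else ∅ := by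
    ext l
    constructor
    · intro hl
      obtain rfl := hl.eq_nil_of_isSource hb
      simp [show i = b from hl]
    · split_ifs with h <;> simp_all [IsDirPath]
  unfold pathSum
  split_ifs at hpaths ⊢ <;> simp [hpaths]

theorem pathSum_eq_sum_incoming [Finite B] [Fintype E]
    (hacyc : ∀ x, ¬TransGen (Step bEnd wEnd o) x x) {i b : B} (hib : i ≠ b) {e₀ : E}
    (he₀ : bEnd e₀ = b) (he₀o : o e₀ = false)
    (hin : ∀ e, bEnd e = b → o e = false → e = e₀) :
    pathSum r o bEnd wEnd i b =
      ∑ e ∈ univ.filter (fun e => wEnd e = wEnd e₀ ∧ o e = true),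
        pathSum r o bEnd wEnd i (bEnd e) * (r e / -r e₀) := by
  set T := univ.filter (fun e => wEnd e = wEnd e₀ ∧ o e = true)
  have hpaths : {l | IsDirPath bEnd wEnd o i l b} =
      ⋃ e ∈ (T : Set E), (· ++ [e, e₀]) '' {l | IsDirPath bEnd wEnd o i l (bEnd e)} := by
    ext l
    simp only [Set.mem_ofPred_eq, Set.mem_iUnion, Set.mem_image, coe_filter, mem_univ,
      true_and, exists_prop, T]
    constructor
    · intro hl
      obtain ⟨l', e, e', rfl, hl', he, hw, he', rfl⟩ :=
        hl.exists_eq_append_pair (by rintro rfl; exact hib hl)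
      obtain rfl := hin e' rfl he'
      exact ⟨e, ⟨hw.symm, he⟩, l', hl', rfl⟩
    · rintro ⟨e, ⟨hw, he⟩, l', hl', rfl⟩
      exact he₀ ▸ hl'.append_pair he hw.symm he₀o
  have hdisj : (T : Set E).PairwiseDisjoint
      fun e => (· ++ [e, e₀]) '' {l | IsDirPath bEnd wEnd o i l (bEnd e)} := by
    intro e₁ _ e₂ _ hne
    refine Set.disjoint_left.2 fun _ ⟨l₁, _, h₁⟩ ⟨l₂, _, h₂⟩ => hne ?_
    simpa using (List.append_inj' (h₁.trans h₂.symm) rfl).2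
  unfold pathSum
  rw [hpaths, finsum_mem_biUnion hdisj T.finite_toSet
    fun e _ => (finite_setOf_isDirPath hacyc i _).image _, finsum_mem_coe_finset]
  refine sum_congr rfl fun e he => ?_
  rw [finsum_mem_image (List.append_left_injective _).injOn, finsum_mem_mul]
  refine finsum_mem_congr rfl fun l _ => ?_
  rw [pathWt_append, pathWt_pair _ _ (mem_filter.1 he).2.2 he₀o]

end PathWeights

theorem eq_sum_smul_of_relation {K M : Type*} [Field K] [AddCommGroup M] [Module K M] [Fintype E]
    {bEnd : E → B} {wEnd : E → W} {o : E → Bool} {v : B → M} {r : E → K} {e₀ : E} (hr : r e₀ ≠ 0)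
    (he₀o : o e₀ = false) (hout : ∀ e, wEnd e = wEnd e₀ → o e = false → e = e₀)
    (hrel : ∑ e ∈ univ.filter (fun e => wEnd e = wEnd e₀), r e • v (bEnd e) = 0) :
    v (bEnd e₀) = ∑ e ∈ univ.filter (fun e => wEnd e = wEnd e₀ ∧ o e = true),
      (r e / -r e₀) • v (bEnd e) := by
  set T := univ.filter (fun e => wEnd e = wEnd e₀ ∧ o e = true)
  have hsplit : univ.filter (fun e => wEnd e = wEnd e₀) = insert e₀ T := by
    ext e
    cases h : o e
    · simpa [T, h] using ⟨(hout e · h), fun h' => h' ▸ rfl⟩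
    · simp +contextual [T, h, or_iff_not_imp_left]
  have he₀T : e₀ ∉ T := by simp [T, he₀o]
  rw [hsplit, sum_insert he₀T, add_eq_zero_iff_eq_neg'] at hrel
  simp only [div_eq_inv_mul, mul_smul, ← smul_sum]
  rw [eq_inv_smul_iff₀ (neg_ne_zero.2 hr), neg_smul, hrel]

theorem eq_sum_pathSum_smul {M : Type*} [AddCommGroup M] [Module ℂ M] [Fintype B] [Fintype E]
    {bEnd : E → B} {wEnd : E → W} {o : E → Bool}
    (hin : ∀ e e', bEnd e = bEnd e' → o e = false → o e' = false → e = e')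
    (hWout : ∀ w, ∃! e, wEnd e = w ∧ o e = false)
    (hacyc : ∀ x, ¬TransGen (Step bEnd wEnd o) x x) {v : B → M} {r : E → ℂ}
    (hr : ∀ e, r e ≠ 0)
    (hrel : ∀ w, ∑ e ∈ univ.filter (fun e => wEnd e = w), r e • v (bEnd e) = 0) (b : B) :
    v b = ∑ i ∈ univ.filter (IsSource bEnd o), pathSum r o bEnd wEnd i b • v i := by
  induction b using (wellFounded_reaches hacyc).induction with
  | _ b ih =>
  by_cases hb : IsSource bEnd o b
  · simp [pathSum_of_isSource hb, ite_smul, hb]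
  obtain ⟨e₀, rfl, he₀o⟩ := not_not.1 hb
  set T := univ.filter fun e => wEnd e = wEnd e₀ ∧ o e = true
  calc v (bEnd e₀) = ∑ e ∈ T, (r e / -r e₀) • v (bEnd e) :=
        eq_sum_smul_of_relation (hr e₀) he₀o
          (fun e h ho => (hWout _).unique ⟨h, ho⟩ ⟨rfl, he₀o⟩) (hrel _)
    _ = ∑ e ∈ T, ∑ i ∈ univ.filter (IsSource bEnd o),
          (pathSum r o bEnd wEnd i (bEnd e) * (r e / -r e₀)) • v i := by
        refine sum_congr rfl fun e he => ?_
        obtain ⟨hw, heo⟩ := (mem_filter.1 he).2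
        rw [ih _ (reaches_of_step heo hw.symm he₀o), smul_sum]
        simp only [smul_smul, mul_comm]
    _ = ∑ i ∈ univ.filter (IsSource bEnd o), pathSum r o bEnd wEnd i (bEnd e₀) • v i := by
        rw [sum_comm]
        refine sum_congr rfl fun i hi => ?_
        have hib : i ≠ bEnd e₀ := by rintro rfl; exact hb (mem_filter.1 hi).2
        rw [← sum_smul, pathSum_eq_sum_incoming hacyc hib rfl he₀o
          fun e h ho => hin e e₀ h ho he₀o]

theorem vrc_vectors_from_paths_general
    [Fintype B] [Fintype E]
    (bEnd : E → B) (wEnd : E → W) (bd : Set B)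
    (hbd_deg : ∀ b ∈ bd, {e | bEnd e = b}.ncard = 1)
    (o : E → Bool)
    (hWout : ∀ w : W, ∃! e, wEnd e = w ∧ o e = false)
    (hBin : ∀ b : B, b ∉ bd → ∃! e, bEnd e = b ∧ o e = false)
    (hacyc : ∀ x : B ⊕ W, ¬Relation.TransGen (Step bEnd wEnd o) x x)
    (m : ℕ)
    (v : B → Fin m → ℂ) (r : E → ℂ)
    (hr : ∀ e, r e ≠ 0)
    (hrel : ∀ w : W,
      ∑ e ∈ Finset.univ.filter (fun e => wEnd e = w), r e • v (bEnd e) = 0) :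
    ∀ b : B, v b =
      ∑ᶠ i ∈ {i : B | IsSource bEnd o i},
        (∑ᶠ l ∈ {l : List E | IsDirPath bEnd wEnd o i l b}, pathWt r o l) • v i := by
  intro b
  rw [finsum_mem_eq_toFinset_sum, Set.toFinset_ofPred]
  exact eq_sum_pathSum_smul (fun _ _ => incoming_edge_unique hbd_deg hBin) hWout hacyc hr hrel b

/-- Let `G` be a finite leafless bipartite (multi)graph with black
vertices `B`, white vertices `W`, edges `E` (with endpoints `bEnd`, `wEnd`), and
boundary vertices `bd ⊆ B`, each of degree `1`, all internal vertices having degree at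
least `2`.  Suppose `G` has an acyclic reverse perfect orientation `o` (every white
vertex has exactly one outgoing edge, every internal black vertex has exactly one
incoming edge, and there are no directed cycles) with source set `I`, and let `(v, r)`
be an `m`-VRC on `G`.  Then for every black vertex `b`,
`v b = Σ_{i ∈ I} (Σ_{P : i → b} wt(P)) • v i`,
the inner sum being over all directed paths from `i` to `b` in the orientation. -/
theorem vrc_vectors_from_paths
    [Fintype B] [Fintype W] [Fintype E]
    (bEnd : E → B) (wEnd : E → W) (bd : Set B)
    (hbd_ne : bd.Nonempty)
    (hbd_deg : ∀ b ∈ bd, {e | bEnd e = b}.ncard = 1)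
    (hleafB : ∀ b : B, b ∉ bd → 2 ≤ {e | bEnd e = b}.ncard)
    (hleafW : ∀ w : W, 2 ≤ {e | wEnd e = w}.ncard)
    (o : E → Bool)
    (hWout : ∀ w : W, ∃! e, wEnd e = w ∧ o e = false)
    (hBin : ∀ b : B, b ∉ bd → ∃! e, bEnd e = b ∧ o e = false)
    (hacyc : ∀ x : B ⊕ W, ¬Relation.TransGen (Step bEnd wEnd o) x x)
    (m : ℕ) (hm : 1 ≤ m)
    (v : B → Fin m → ℂ) (r : E → ℂ)
    (hr : ∀ e, r e ≠ 0)
    (hspan : Submodule.span ℂ (v '' bd) = ⊤)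
    (hrel : ∀ w : W,
      ∑ e ∈ Finset.univ.filter (fun e => wEnd e = w), r e • v (bEnd e) = 0) :
    ∀ b : B, v b =
      ∑ᶠ i ∈ {i : B | IsSource bEnd o i},
        (∑ᶠ l ∈ {l : List E | IsDirPath bEnd wEnd o i l b}, pathWt r o l) • v i :=
  vrc_vectors_from_paths_general bEnd wEnd bd hbd_deg o hWout hBin hacyc m v r hr hrel

end
end

section
/- Let G be a finite leafless bipartite (multi)graph with black/white vertices and boundary vertices as described, and suppose G admits an acyclic reverse perfect orientation. If (v, r) and (v', r') are m-VRCs on G with r_e = r'_e for every edge e and v_i = v'_i for every boundary vertex i ∈ B_bd, then v_b = v'_b for every black vertex b. In other words, the vectors of an m-VRC on G are determined by its boundary vectors and its edge coefficients. -/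
/-!
Orient the graph by the acyclic reverse perfect orientation and induct along it. An internal
black vertex `b` has a unique incoming edge, coming from a white vertex `w`; every other edge at
`w` points into `w`, so its black endpoint precedes `b`. By induction those endpoints carry the
same vector in both configurations, and the relation at `w`, whose coefficient at `b` is nonzero,
then forces `v b = v' b`. Boundary vertices start the induction.
-/

open scoped Classical

noncomputable section

variable {B W E : Type}

open Relation

theorem wellFounded_transGen_of_irrefl {α : Type*} [Finite α] {R : α → α → Prop}
    (h : ∀ x, ¬TransGen R x x) : WellFounded (TransGen R) :=
  have : IsTrans α (TransGen R) := ⟨fun _ _ _ => TransGen.trans⟩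
  have : Std.Irrefl (TransGen R) := ⟨h⟩
  Finite.wellFounded_of_trans_of_irrefl _

theorem eq_of_sum_smul_eq_zero_of_eqOn_erase {ι R M : Type*} [DecidableEq ι] [Ring R]
    [AddCommGroup M] [Module R M] {s : Finset ι} {r : ι → R} {x y : ι → M}
    (hx : ∑ i ∈ s, r i • x i = 0) (hy : ∑ i ∈ s, r i • y i = 0) {i₀ : ι} (hi₀ : i₀ ∈ s)
    (hr : IsSMulRegular M (r i₀)) (hxy : Set.EqOn x y (s.erase i₀)) : x i₀ = y i₀ := by
  have hdiff : ∑ i ∈ s, r i • (x i - y i) = 0 := by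
    simp only [smul_sub, Finset.sum_sub_distrib, hx, hy, sub_zero]
  rw [Finset.sum_eq_single_of_mem i₀ hi₀ fun i hi hne => by
    rw [hxy (Finset.mem_erase.2 ⟨hne, hi⟩), sub_self, smul_zero]] at hdiff
  exact hr (sub_eq_zero.1 ((smul_sub _ _ _).symm.trans hdiff))

theorem transGen_step_of_wEnd_eq_of_ne {bEnd : E → B} {wEnd : E → W} {o : E → Bool}
    {e₀ e : E} (hout : ∃! e', wEnd e' = wEnd e₀ ∧ o e' = false) (he₀ : o e₀ = false)
    (he : wEnd e = wEnd e₀) (hne : e ≠ e₀) :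
    TransGen (Step bEnd wEnd o) (Sum.inl (bEnd e)) (Sum.inl (bEnd e₀)) := by
  have ho : o e = true := by
    by_contra h
    exact hne (hout.unique ⟨he, Bool.eq_false_iff.2 h⟩ ⟨rfl, he₀⟩)
  exact TransGen.head (b := Sum.inr (wEnd e₀)) ⟨e, rfl, he, ho⟩
    (TransGen.single ⟨e₀, rfl, rfl, he₀⟩)

theorem vrc_determined_by_boundary_and_coefficients_general
    [Fintype B] [Fintype W] [Fintype E]
    (bEnd : E → B) (wEnd : E → W) (bd : Set B)
    (horient : ∃ o : E → Bool,
      (∀ w : W, ∃! e, wEnd e = w ∧ o e = false) ∧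
      (∀ b : B, b ∉ bd → ∃! e, bEnd e = b ∧ o e = false) ∧
      (∀ x : B ⊕ W, ¬Relation.TransGen (Step bEnd wEnd o) x x))
    (m : ℕ)
    (v v' : B → Fin m → ℂ) (r r' : E → ℂ)
    (hr : ∀ e, r e ≠ 0)
    (hrel : ∀ w : W,
      ∑ e ∈ Finset.univ.filter (fun e => wEnd e = w), r e • v (bEnd e) = 0)
    (hrel' : ∀ w : W,
      ∑ e ∈ Finset.univ.filter (fun e => wEnd e = w), r' e • v' (bEnd e) = 0)
    (hcoeff : ∀ e, r e = r' e)
    (hbdv : ∀ i ∈ bd, v i = v' i) :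
    ∀ b : B, v b = v' b := by
  obtain ⟨o, hw, hb, hacyc⟩ := horient
  obtain rfl : r = r' := funext hcoeff
  have hwf : WellFounded fun b' b => TransGen (Step bEnd wEnd o) (Sum.inl b') (Sum.inl b) :=
    InvImage.wf Sum.inl (wellFounded_transGen_of_irrefl hacyc)
  intro b
  induction b using hwf.induction with
  | _ b ih =>
    by_cases hbd : b ∈ bd
    · exact hbdv b hbd
    obtain ⟨e₀, ⟨rfl, he₀⟩, -⟩ := hb b hbd
    refine eq_of_sum_smul_eq_zero_of_eqOn_erase (x := fun e => v (bEnd e))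
      (y := fun e => v' (bEnd e)) (hrel (wEnd e₀)) (hrel' _) (by simp) (.of_ne_zero (hr e₀))
      fun e he => ?_
    obtain ⟨hne, he⟩ := Finset.mem_erase.1 he
    exact ih _ (transGen_step_of_wEnd_eq_of_ne (hw _) he₀ (Finset.mem_filter.1 he).2 hne)

/-- Let `G` be a finite leafless bipartite (multi)graph with black
vertices `B`, white vertices `W`, edges `E` (with endpoints `bEnd`, `wEnd`), and
boundary vertices `bd ⊆ B`, each of degree `1`, all internal vertices having degree at
least `2`.  Suppose `G` admits an acyclic reverse perfect orientation.  If `(v, r)` and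
`(v', r')` are `m`-VRCs on `G` with `r e = r' e` for every edge `e` and `v i = v' i` for
every boundary vertex `i ∈ bd`, then `v b = v' b` for every black vertex `b`: the
vectors of an `m`-VRC are determined by its boundary vectors and edge coefficients. -/
theorem vrc_determined_by_boundary_and_coefficients
    [Fintype B] [Fintype W] [Fintype E]
    (bEnd : E → B) (wEnd : E → W) (bd : Set B)
    (hbd_ne : bd.Nonempty)
    (hbd_deg : ∀ b ∈ bd, {e | bEnd e = b}.ncard = 1)
    (hleafB : ∀ b : B, b ∉ bd → 2 ≤ {e | bEnd e = b}.ncard)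
    (hleafW : ∀ w : W, 2 ≤ {e | wEnd e = w}.ncard)
    (horient : ∃ o : E → Bool,
      (∀ w : W, ∃! e, wEnd e = w ∧ o e = false) ∧
      (∀ b : B, b ∉ bd → ∃! e, bEnd e = b ∧ o e = false) ∧
      (∀ x : B ⊕ W, ¬Relation.TransGen (Step bEnd wEnd o) x x))
    (m : ℕ) (hm : 1 ≤ m)
    (v v' : B → Fin m → ℂ) (r r' : E → ℂ)
    (hr : ∀ e, r e ≠ 0) (hr' : ∀ e, r' e ≠ 0)
    (hspan : Submodule.span ℂ (v '' bd) = ⊤)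
    (hspan' : Submodule.span ℂ (v' '' bd) = ⊤)
    (hrel : ∀ w : W,
      ∑ e ∈ Finset.univ.filter (fun e => wEnd e = w), r e • v (bEnd e) = 0)
    (hrel' : ∀ w : W,
      ∑ e ∈ Finset.univ.filter (fun e => wEnd e = w), r' e • v' (bEnd e) = 0)
    (hcoeff : ∀ e, r e = r' e)
    (hbdv : ∀ i ∈ bd, v i = v' i) :
    ∀ b : B, v b = v' b :=
  vrc_determined_by_boundary_and_coefficients_general bEnd wEnd bd horient m v v' r r' hr hrel hrel'
    hcoeff hbdv

end
end

section
/- Let G be a finite tree, properly 2-colored black/white, whose leaves are exactly the black boundary vertices 1,…,n; fix an internal vertex r, vectors z_1,…,z_n ∈ ℂ^m, and define the subspaces V_x ⊆ ℂ^m for all vertices x recursively toward the root r as described (span at boundary leaves, sum of children's subspaces at white vertices, intersection of children's subspaces at black vertices). If (v, r_e) is an m-vector-relation configuration on G whose boundary vectors satisfy v_i = z_i for every boundary vertex i = 1,…,n, then for every black vertex b of G, the vector v_b lies in the subspace V_b. -/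
/-!
Induct on the distance from `r`, starting at the boundary. Let `b` be an internal black vertex
and `w` a child of `b`. Since a tree is acyclic, `b` is the only neighbour of `w` closer to `r`,
and by bipartiteness no neighbour is at the same distance, so every other neighbour `b'` of `w`
is a child of `w`. The relation at `w` writes `r_{wb} • v_b` as a combination of these `v_{b'}`,
which lie in `V_{b'} ⊆ V_w` by induction; as `r_{wb} ≠ 0`, `v_b ∈ V_w`. Intersecting over the
children `w` gives `v_b ∈ V_b`.
-/

theorem Submodule.mem_of_finsum_smul_eq_zero {K M ι : Type*} [DivisionRing K] [AddCommGroup M]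
    [Module K M] (W : Submodule K M) {s : Set ι} (hs : s.Finite) {c : ι → K} {v : ι → M}
    {i : ι} (hi : i ∈ s) (hci : c i ≠ 0) (hrel : ∑ᶠ j ∈ s, c j • v j = 0)
    (hW : ∀ j ∈ s, j ≠ i → v j ∈ W) : v i ∈ W := by
  classical
  rw [finsum_mem_eq_finite_toFinset_sum _ hs,
    ← Finset.add_sum_erase _ _ (hs.mem_toFinset.mpr hi), add_eq_zero_iff_eq_neg] at hrel
  rw [← W.smul_mem_iff hci, hrel]
  refine W.neg_mem (W.sum_mem fun j hj => W.smul_mem _ (hW j ?_ ?_))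
  · exact hs.mem_toFinset.mp (Finset.mem_of_mem_erase hj)
  · exact Finset.ne_of_mem_erase hj

namespace SimpleGraph

variable {V : Type*} {G : SimpleGraph V} {u v w : V}

theorem dist_lt_card [Fintype V] (u v : V) : G.dist u v < Fintype.card V := by
  by_cases huv : G.Reachable u v
  · obtain ⟨p, hp, hl⟩ := huv.exists_path_of_dist
    exact hl ▸ hp.length_lt
  · rw [dist_eq_zero_of_not_reachable huv]
    exact Fintype.card_pos_iff.mpr ⟨u⟩

theorem Coloring.even_dist_iff_congr (c : G.Coloring Bool) (huv : G.Reachable u v) :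
    Even (G.dist u v) ↔ (c u ↔ c v) := by
  obtain ⟨p, hp⟩ := huv.exists_walk_length_eq_dist
  exact hp ▸ c.even_length_iff_congr p

theorem Coloring.dist_eq_add_one_or_of_adj (c : G.Coloring Bool) (huv : G.Reachable u v)
    (hvw : G.Adj v w) : G.dist u w = G.dist u v + 1 ∨ G.dist u v = G.dist u w + 1 := by
  have hne : G.dist u v ≠ G.dist u w := by
    intro h
    have hparity := (c.even_dist_iff_congr huv).symm.trans
      (h ▸ c.even_dist_iff_congr (huv.trans hvw.reachable))
    exact c.valid hvw (Bool.eq_iff_iff.mpr (by tauto))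
  rcases hvw.diff_dist_adj (u := u) with h | h | h <;> omega

theorem IsAcyclic.eq_of_adj_of_dist_eq_add_one (hG : G.IsAcyclic) {r x y y' : V}
    (hy : G.Adj y x) (hy' : G.Adj y' x) (hdy : G.dist r x = G.dist r y + 1)
    (hdy' : G.dist r x = G.dist r y' + 1) : y = y' := by
  have hrx : G.Reachable r x := Reachable.of_dist_ne_zero (by omega)
  obtain ⟨p, hp⟩ := (hrx.trans hy.symm.reachable).exists_walk_length_eq_dist
  obtain ⟨p', hp'⟩ := (hrx.trans hy'.symm.reachable).exists_walk_length_eq_dist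
  have hpath : (p.concat hy).IsPath := (p.concat hy).isPath_of_length_eq_dist (by simp [hp, hdy])
  have hpath' : (p'.concat hy').IsPath :=
    (p'.concat hy').isPath_of_length_eq_dist (by simp [hp', hdy'])
  have he := congrArg Subtype.val ((hG.subsingleton_path _ _).elim ⟨_, hpath⟩ ⟨_, hpath'⟩)
  exact (Walk.concat_inj he).1

theorem IsAcyclic.dist_eq_add_one_of_adj_of_ne (hG : G.IsAcyclic) (c : G.Coloring Bool)
    {r b w y : V} (hbw : G.Adj b w) (hdw : G.dist r w = G.dist r b + 1) (hwy : G.Adj w y)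
    (hyb : y ≠ b) : G.dist r y = G.dist r w + 1 := by
  have hrw : G.Reachable r w := Reachable.of_dist_ne_zero (by omega)
  refine (c.dist_eq_add_one_or_of_adj hrw hwy).resolve_right fun hdy => hyb ?_
  exact hG.eq_of_adj_of_dist_eq_add_one hwy.symm hbw hdy hdw

end SimpleGraph

theorem vrc_vectors_in_recursive_subspaces_general
    {V : Type} [Fintype V] (G : SimpleGraph V) (htree : G.IsTree)
    (color : V → Bool)
    (hproper : ∀ x y : V, G.Adj x y → color x ≠ color y)
    (n : ℕ) (ι : Fin n → V)
    (r : V)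
    (m : ℕ)
    (z : Fin n → Fin m → ℂ)
    (U : V → Submodule ℂ (Fin m → ℂ))
    (hUleaf : ∀ i : Fin n, U (ι i) = Submodule.span ℂ {z i})
    (hUwhite : ∀ x : V, color x = false →
      U x = ⨆ y ∈ {y | G.Adj x y ∧ G.dist r y = G.dist r x + 1}, U y)
    (hUblack : ∀ x : V, color x = true → (¬∃ i, ι i = x) →
      U x = ⨅ y ∈ {y | G.Adj x y ∧ G.dist r y = G.dist r x + 1}, U y)
    (v : V → Fin m → ℂ) (re : Sym2 V → ℂ)
    (hre : ∀ e ∈ G.edgeSet, re e ≠ 0)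
    (hrel : ∀ w : V, color w = false → ∑ᶠ b ∈ {b | G.Adj w b}, re s(w, b) • v b = 0)
    (hbdry : ∀ i : Fin n, v (ι i) = z i) :
    ∀ b : V, color b = true → v b ∈ U b := by
  let c : G.Coloring Bool := SimpleGraph.Coloring.mk color fun h => hproper _ _ h
  intro b
  -- induction from the leaves towards `r`, i.e. on decreasing distance from `r`
  induction b using (measure fun x => Fintype.card V - G.dist r x).wf.induction with
  | h b ih =>
  intro hb
  by_cases hb_bdry : ∃ i, ι i = b
  · obtain ⟨i, rfl⟩ := hb_bdry
    rw [hUleaf, hbdry]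
    exact Submodule.mem_span_singleton_self _
  rw [hUblack b hb hb_bdry]
  simp only [Submodule.mem_iInf]
  rintro w ⟨hbw, hdw⟩
  have hw : color w = false := by simpa [hb] using (hproper b w hbw).symm
  refine (U w).mem_of_finsum_smul_eq_zero (Set.toFinite _) hbw.symm (hre _ hbw.symm)
    (hrel w hw) fun b' hwb' hb'b => ?_
  have hdb' := htree.isAcyclic.dist_eq_add_one_of_adj_of_ne c hbw hdw hwb' hb'b
  have hvb' : v b' ∈ U b' :=
    ih b' (show Fintype.card V - _ < Fintype.card V - _ by have := G.dist_lt_card r b'; omega)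
      (by simpa [hw] using hproper w b' hwb')
  rw [hUwhite w hw]
  exact Submodule.mem_iSup_of_mem b' (Submodule.mem_iSup_of_mem ⟨hwb', hdb'⟩ hvb')

/-- Let `G` be a finite tree, properly 2-colored black/white
(`color x = true` means `x` is black), whose leaves are exactly the black boundary
vertices `ι 1, …, ι n`; fix an internal vertex `r`, vectors `z 1, …, z n ∈ ℂ^m`, and let
`U x ⊆ ℂ^m` (for vertices `x`) be the family of subspaces defined recursively toward the
root `r`: `U (ι i) = span(z i)` at boundary leaves, `U x = Σ_{y child of x} U y` at white
vertices and `U x = ∩_{y child of x} U y` at internal black vertices, where the children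
of `x` are its neighbors `y` with `dist r y = dist r x + 1`.  If `(v, re)` is an
`m`-vector-relation configuration on `G` whose boundary vectors satisfy `v (ι i) = z i`,
then for every black vertex `b` of `G`, the vector `v b` lies in the subspace `U b`. -/
theorem vrc_vectors_in_recursive_subspaces
    {V : Type} [Fintype V] (G : SimpleGraph V) (htree : G.IsTree)
    (color : V → Bool)
    (hproper : ∀ x y : V, G.Adj x y → color x ≠ color y)
    (n : ℕ) (ι : Fin n → V) (hι : Function.Injective ι)
    (hleaf : ∀ x : V, ({y | G.Adj x y}.ncard = 1 ↔ ∃ i, ι i = x))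
    (hblack : ∀ i : Fin n, color (ι i) = true)
    (r : V) (hr : ¬∃ i, ι i = r)
    (m : ℕ) (hm : 1 ≤ m)
    (z : Fin n → Fin m → ℂ)
    (U : V → Submodule ℂ (Fin m → ℂ))
    (hUleaf : ∀ i : Fin n, U (ι i) = Submodule.span ℂ {z i})
    (hUwhite : ∀ x : V, color x = false →
      U x = ⨆ y ∈ {y | G.Adj x y ∧ G.dist r y = G.dist r x + 1}, U y)
    (hUblack : ∀ x : V, color x = true → (¬∃ i, ι i = x) →
      U x = ⨅ y ∈ {y | G.Adj x y ∧ G.dist r y = G.dist r x + 1}, U y)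
    (v : V → Fin m → ℂ) (re : Sym2 V → ℂ)
    (hre : ∀ e ∈ G.edgeSet, re e ≠ 0)
    (hrel : ∀ w : V, color w = false → ∑ᶠ b ∈ {b | G.Adj w b}, re s(w, b) • v b = 0)
    (hbdry : ∀ i : Fin n, v (ι i) = z i) :
    ∀ b : V, color b = true → v b ∈ U b :=
  vrc_vectors_in_recursive_subspaces_general G htree color hproper n ι r m z U hUleaf hUwhite
    hUblack v re hre hrel hbdry
end
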